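/- (Generalized Hong–Ou–Mandel output symmetry) Let F = (1/√2)·[[1,1],[1,−1]] and let n̄ be a positive integer. Then for every pair (n₁,n₂) of nonnegative integers with n₁ + n₂ = 2n̄, the 2n̄-boson representation of F satisfies |[B_{2n̄}(F)]_{(n₁,n₂),(n̄,n̄)}| = |[B_{2n̄}(F)]_{(n₂,n₁),(n̄,n̄)}|. -/

import Mathlib

namespace BSF

variable {α : Type*} [Fintype α] [DecidableEq α]

/-- The canonical list in which each index `i` is repeated `ν i` times. -/
noncomputable def repList (ν : α → ℕ) : List α :=
  Finset.univ.toList.flatMap fun i => List.replicate (ν i) i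

set_option linter.unusedSectionVars false in
lemma repList_length (ν : α → ℕ) : (repList ν).length = ∑ i, ν i := by
  simp [repList, List.length_flatMap]

/-- The index set `T(m,n)`: occupation-number tuples with total `n`. -/
def BosonIdx (α : Type*) [Fintype α] (n : ℕ) := {ν : α → ℕ // ∑ i, ν i = n}

instance {n : ℕ} : DecidableEq (BosonIdx α n) :=
  inferInstanceAs (DecidableEq {ν : α → ℕ // ∑ i, ν i = n})

noncomputable instance {n : ℕ} : Fintype (BosonIdx α n) :=
  Fintype.ofInjective
    (fun ν : BosonIdx α n => fun i : α =>
      (⟨ν.1 i, by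
        have h := Finset.single_le_sum (f := ν.1) (fun j _ => Nat.zero_le _) (Finset.mem_univ i)
        rw [ν.2] at h
        omega⟩ : Fin (n + 1)))
    (fun a b hab => Subtype.ext (funext fun i => congrArg Fin.val (congrFun hab i)))

/-- The permanent of a square complex matrix. -/
noncomputable def permanent {n : ℕ} (M : Matrix (Fin n) (Fin n) ℂ) : ℂ :=
  ∑ σ : Equiv.Perm (Fin n), ∏ i, M (σ i) i

/-- The canonical repetition function associated with an occupation tuple. -/
noncomputable def repFun {n : ℕ} (ν : BosonIdx α n) : Fin n → α :=
  fun k => (repList ν.1).get (Fin.cast ((repList_length ν.1).trans ν.2).symm k)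

/-- The `n`-boson representation of a matrix `S`. -/
noncomputable def bosonRep (n : ℕ) (S : Matrix α α ℂ) :
    Matrix (BosonIdx α n) (BosonIdx α n) ℂ :=
  Matrix.of fun ν ν' =>
    permanent (Matrix.of fun k l => S (repFun ν k) (repFun ν' l)) /
      (Real.sqrt ((∏ i, (ν.1 i).factorial * (ν'.1 i).factorial : ℕ) : ℝ) : ℂ)

/-- Relabeling an occupation tuple by (precomposition with) a permutation of the modes. -/
def permIdx {n : ℕ} (σ : Equiv.Perm α) (ν : BosonIdx α n) : BosonIdx α n :=
  ⟨ν.1 ∘ σ, show ∑ i, ν.1 (σ i) = n from (Equiv.sum_comp σ ν.1).trans ν.2⟩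

/-! Swapping the two output modes permutes the rows of `F`, and `F` with its rows swapped is
`F * diagonal ![1, -1]`. Permuting the rows of `S` only relabels the occupation tuple `ν`: the
repeated rows are the same up to order, which the permanent ignores. Multiplying `S` on the right
by `diagonal d` multiplies the entry at input `ν'` by `∏ i, d i ^ ν' i`, here a sign. -/

lemma bosonRep_apply {n : ℕ} (S : Matrix α α ℂ) (ν ν' : BosonIdx α n) :
    bosonRep n S ν ν' = permanent (S.submatrix (repFun ν) (repFun ν')) /
      (Real.sqrt ((∏ i, (ν.1 i).factorial * (ν'.1 i).factorial : ℕ) : ℝ) : ℂ) :=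
  rfl

lemma permanent_submatrix_perm_left {n : ℕ} (e : Equiv.Perm (Fin n))
    (M : Matrix (Fin n) (Fin n) ℂ) : permanent (M.submatrix e id) = permanent M :=
  M.permanent_permute_cols e

lemma permanent_mul_diagonal {n : ℕ} (M : Matrix (Fin n) (Fin n) ℂ) (d : Fin n → ℂ) :
    permanent (M * Matrix.diagonal d) = (∏ l, d l) * permanent M := by
  simp only [permanent, Matrix.mul_diagonal, Finset.prod_mul_distrib, Finset.mul_sum, mul_comm]

omit [Fintype α] in
lemma card_fiber_get_eq_count (l : List α) (a : α) :
    Fintype.card {k : Fin l.length // l.get k = a} = l.count a := by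
  rw [Fintype.card_subtype]
  exact Fin.card_filter_univ_eq_vector_get_eq_count a ⟨l, rfl⟩

lemma count_repList (ν : α → ℕ) (a : α) : (repList ν).count a = ν a := by
  simp [repList, List.count_flatMap, List.count_replicate, Finset.sum_map_toList]

lemma card_fiber_repFun {n : ℕ} (ν : BosonIdx α n) (a : α) :
    Fintype.card {k : Fin n // repFun ν k = a} = ν.1 a := by
  rw [← count_repList ν.1 a, ← card_fiber_get_eq_count]
  exact Fintype.card_congr
    (Equiv.subtypeEquiv (finCongr ((repList_length ν.1).trans ν.2).symm) fun _ => Iff.rfl)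

omit [Fintype α] in
lemma exists_perm_eq_comp_of_card_fiber_eq {ι : Type*} [Fintype ι] (f g : ι → α)
    (h : ∀ a, Fintype.card {i // f i = a} = Fintype.card {i // g i = a}) :
    ∃ e : Equiv.Perm ι, f = g ∘ e := by
  let fibers : (Σ a, {i // f i = a}) ≃ Σ a, {i // g i = a} :=
    Equiv.sigmaCongrRight fun a => Fintype.equivOfCardEq (h a)
  refine ⟨(Equiv.sigmaFiberEquiv f).symm.trans (fibers.trans (Equiv.sigmaFiberEquiv g)),
    funext fun i => ?_⟩
  exact (fibers ⟨f i, i, rfl⟩).2.2.symm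

lemma exists_perm_repFun_permIdx {n : ℕ} (σ : Equiv.Perm α) (ν : BosonIdx α n) :
    ∃ e : Equiv.Perm (Fin n), repFun (permIdx σ ν) = σ.symm ∘ repFun ν ∘ e := by
  refine exists_perm_eq_comp_of_card_fiber_eq _ (σ.symm ∘ repFun ν) fun a => ?_
  rw [card_fiber_repFun]
  refine (card_fiber_repFun ν (σ a)).symm.trans (Fintype.card_congr ?_)
  exact Equiv.subtypeEquivRight fun k => σ.symm_apply_eq.symm

omit [DecidableEq α] in
lemma prod_factorial_permIdx {n : ℕ} (σ : Equiv.Perm α) (ν ν' : BosonIdx α n) :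
    ∏ i, ((permIdx σ ν).1 i).factorial * (ν'.1 i).factorial =
      ∏ i, (ν.1 i).factorial * (ν'.1 i).factorial := by
  simp only [Finset.prod_mul_distrib, permIdx, Function.comp_apply,
    Equiv.prod_comp σ fun i => (ν.1 i).factorial]

lemma bosonRep_permIdx_left {n : ℕ} (σ : Equiv.Perm α) (S : Matrix α α ℂ)
    (ν ν' : BosonIdx α n) :
    bosonRep n S (permIdx σ ν) ν' = bosonRep n (S.submatrix σ.symm id) ν ν' := by
  obtain ⟨e, he⟩ := exists_perm_repFun_permIdx σ ν
  rw [bosonRep_apply, bosonRep_apply, prod_factorial_permIdx, he]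
  congr 1
  exact permanent_submatrix_perm_left e ((S.submatrix σ.symm id).submatrix (repFun ν) (repFun ν'))

lemma prod_comp_repFun {n : ℕ} (ν : BosonIdx α n) (d : α → ℂ) :
    ∏ k, d (repFun ν k) = ∏ i, d i ^ ν.1 i := by
  simp only [← Fintype.prod_fiberwise' (repFun ν) d, Finset.prod_const, Finset.card_univ,
    card_fiber_repFun]

lemma bosonRep_mul_diagonal {n : ℕ} (S : Matrix α α ℂ) (d : α → ℂ) (ν ν' : BosonIdx α n) :
    bosonRep n (S * Matrix.diagonal d) ν ν' = (∏ i, d i ^ ν'.1 i) * bosonRep n S ν ν' := by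
  have hsub : (S * Matrix.diagonal d).submatrix (repFun ν) (repFun ν') =
      S.submatrix (repFun ν) (repFun ν') * Matrix.diagonal (d ∘ repFun ν') := by
    ext k l
    simp [Matrix.mul_diagonal]
  rw [bosonRep_apply, bosonRep_apply, hsub, permanent_mul_diagonal, mul_div_assoc]
  simp only [Function.comp_apply, prod_comp_repFun]

/-- Generalized Hong–Ou–Mandel output symmetry. For the 50:50 beam
splitter `F = (1/√2)·[[1,1],[1,−1]]` and input `(n̄, n̄)`, the outputs `(n₁, n₂)` and
`(n₂, n₁)` have entries of equal modulus in the `2n̄`-boson representation of `F`. -/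
theorem hom_output_symmetry (nb : ℕ) (n₁ n₂ : ℕ)
    (h : n₁ + n₂ = 2 * nb) :
    ‖(bosonRep (2 * nb)
      (((Real.sqrt 2 : ℝ) : ℂ)⁻¹ • (!![1, 1; 1, -1] : Matrix (Fin 2) (Fin 2) ℂ))
      ⟨![n₁, n₂], by simpa [Fin.sum_univ_two] using h⟩
      ⟨![nb, nb], by simp [Fin.sum_univ_two]; omega⟩)‖ =
    ‖(bosonRep (2 * nb)
      (((Real.sqrt 2 : ℝ) : ℂ)⁻¹ • (!![1, 1; 1, -1] : Matrix (Fin 2) (Fin 2) ℂ))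
      ⟨![n₂, n₁], by simp [Fin.sum_univ_two]; omega⟩
      ⟨![nb, nb], by simp [Fin.sum_univ_two]; omega⟩)‖ := by
  set F := ((Real.sqrt 2 : ℝ) : ℂ)⁻¹ • (!![1, 1; 1, -1] : Matrix (Fin 2) (Fin 2) ℂ)
  have hF : F.submatrix (Equiv.swap 0 1) id = F * Matrix.diagonal ![1, -1] := by
    ext i j
    fin_cases i <;> fin_cases j <;> simp [F, Matrix.mul_diagonal]
  have hsymm : ∀ ν μ : BosonIdx (Fin 2) (2 * nb),
      ‖bosonRep _ F ν μ‖ = ‖bosonRep _ F (permIdx (Equiv.swap 0 1) ν) μ‖ := by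
    intro ν μ
    rw [bosonRep_permIdx_left, Equiv.symm_swap, hF, bosonRep_mul_diagonal, norm_mul]
    simp
  refine (hsymm _ _).trans ?_
  congr 2
  exact Subtype.ext (funext fun i => by fin_cases i <;> rfl)

end BSF
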